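/- Let A be an LTS containing: (i) a path t₀--k-->t₁--X₀-->t₂--X₁-->…--X_{m−1}-->t_{m+1}, plus edges f_{j,0}--a-->f_{j,1} and f_{j,0}--X_j-->f_{j,1} for each j ∈ {0,…,m−1}, and (ii) a cycle d₀--a-->d₁--a-->…--a-->d_m--k-->d₀. Then every region R=(sup,con,pro) of A satisfies sup(t_{m+1}) = sup(t₀); i.e., no region separates t₀ from t_{m+1}. -/
import Mathlib


/-- Key step of the edge-removal-for-embedding reduction: in the presence of
the synchronizing gadgets `f_{j,0} --a--> f_{j,1}`, `f_{j,0} --X_j--> f_{j,1}`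
and the cycle `d₀ --a--> ⋯ --a--> d_m --k--> d₀`, no region separates the
endpoints `t₀` and `t_{m+1}` of the path labeled `k, X₀, …, X_{m-1}`. -/
theorem no_region_separates_path_endpoints {S E : Type*}
    (delta : S → E → Option S)
    (sup : S → ℕ) (con pro : E → ℕ)
    (hR : ∀ s e s', delta s e = some s' →
      con e ≤ sup s ∧ sup s' = sup s - con e + pro e)
    (m : ℕ) (a k : E) (X : ℕ → E)
    (t : ℕ → S) (f₀ f₁ : ℕ → S) (d : ℕ → S)
    (ht0 : delta (t 0) k = some (t 1))
    (ht : ∀ i < m, delta (t (i + 1)) (X i) = some (t (i + 2)))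
    (hfa : ∀ j < m, delta (f₀ j) a = some (f₁ j))
    (hfX : ∀ j < m, delta (f₀ j) (X j) = some (f₁ j))
    (hcyc : ∀ i < m, delta (d i) a = some (d (i + 1)))
    (hclose : delta (d m) k = some (d 0)) :
    sup (t (m + 1)) = sup (t 0) := by
  -- integer effect of an edge
  have step : ∀ s e s', delta s e = some s' →
      (sup s' : ℤ) = sup s + ((pro e : ℤ) - con e) := by
    intro s e s' h
    obtain ⟨h1, h2⟩ := hR s e s' h
    rw [h2]
    push_cast [Nat.cast_sub h1]
    ring
  -- eff (X j) = eff a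
  have haX : ∀ j < m, (pro (X j) : ℤ) - con (X j) = (pro a : ℤ) - con a := by
    intro j hj
    have h1 := step _ _ _ (hfa j hj)
    have h2 := step _ _ _ (hfX j hj)
    omega
  -- along the cycle
  have hd : ∀ i ≤ m, (sup (d i) : ℤ) = sup (d 0) + i * ((pro a : ℤ) - con a) := by
    intro i hi
    induction i with
    | zero => simp
    | succ n ih =>
      have hn : n < m := hi
      have := step _ _ _ (hcyc n hn)
      rw [ih (le_of_lt hn)] at this
      rw [this]; push_cast; ring
  have hk : (pro k : ℤ) - con k = - (m : ℤ) * ((pro a : ℤ) - con a) := by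
    have h1 := step _ _ _ hclose
    rw [hd m le_rfl] at h1
    linarith
  -- along the path
  have htp : ∀ i ≤ m, (sup (t (i + 1)) : ℤ) =
      sup (t 0) + ((pro k : ℤ) - con k) + i * ((pro a : ℤ) - con a) := by
    intro i hi
    induction i with
    | zero => simpa using step _ _ _ ht0
    | succ n ih =>
      have hn : n < m := hi
      have := step _ _ _ (ht n hn)
      rw [ih (le_of_lt hn), haX n hn] at this
      rw [this]; push_cast; ring
  have := htp m le_rfl
  rw [hk] at this
  have hfin : (sup (t (m + 1)) : ℤ) = sup (t 0) := by linarith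
  exact_mod_cast hfin
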